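/- arXiv:2205.00442 — 2 statements merged into one kernel-verified Lean document; each statement's English description precedes it below -/
import Mathlib

section
/- Let (G, H, (g_v), (c_v), a) be a BNPG game with altruism in which G is the complete graph on a vertex set V of size |V| = n, and let k be an integer with 0 < k < n. Define R₀(k) := {v ∈ V : Δg_v(k) + a·∑_{u∈N_v} Δg_u(k) ≤ c_v} and R₁(k) := {v ∈ V : Δg_v(k−1) + a·∑_{u∈N_v} Δg_u(k−1) ≥ c_v}. If |R₁(k)| ≥ k, |R₀(k)| ≥ n − k, and |R₀(k) \ R₁(k)| = |V \ R₁(k)|, then there exists a pure strategy Nash equilibrium in which exactly k players play 1. -/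
/-!
On the complete graph every player sees the same total `m` of players playing 1, so the
unilateral gain of switching from 0 to 1 at total `m` is `Δg_v(m) + a ∑_{u ∈ N_v} Δg_u(m) - c_v`.
Hence a profile with exactly `k` ones is a PSNE if its 1-players lie in `R₁(k)` and its
0-players in `R₀(k)`. The cardinality condition says `R₀(k) ∪ R₁(k) = V`, and then any `k`-set
`S` with `R₁(k) \ R₀(k) ⊆ S ⊆ R₁(k)` works; it exists since `|R₁(k) \ R₀(k)| ≤ n - |R₀(k)| ≤ k`.
-/

open Finset

/-- `Δg(t) = g(t+1) - g(t)`. -/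
def dg (g : ℕ → ℝ) (t : ℕ) : ℝ := g (t + 1) - g t

/-- Number of `G`-neighbors of `v` playing 1 in the profile `x`. -/
def nv {W : Type*} [Fintype W] [DecidableEq W] (G : SimpleGraph W) [DecidableRel G.Adj]
    (x : W → Bool) (v : W) : ℕ :=
  ((G.neighborFinset v).filter (fun u => x u = true)).card

/-- Utility of player `v` in a BNPG game with altruism: input graph `G`,
altruistic (out-)neighborhoods `N`, externality functions `g`, costs `c`,
altruism parameter `a`. -/
def util {W : Type*} [Fintype W] [DecidableEq W] (G : SimpleGraph W) [DecidableRel G.Adj]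
    (N : W → Finset W) (g : W → ℕ → ℝ) (c : W → ℝ) (a : ℝ)
    (x : W → Bool) (v : W) : ℝ :=
  g v ((x v).toNat + nv G x v)
    + a * ∑ u ∈ N v, g u ((x u).toNat + nv G x u)
    - c v * (x v).toNat

/-- Pure strategy Nash equilibrium of a BNPG game with altruism. -/
def isPSNE {W : Type*} [Fintype W] [DecidableEq W] (G : SimpleGraph W) [DecidableRel G.Adj]
    (N : W → Finset W) (g : W → ℕ → ℝ) (c : W → ℝ) (a : ℝ) (x : W → Bool) : Prop :=
  ∀ v : W, ∀ b : Bool,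
    util G N g c a x v ≥ util G N g c a (Function.update x v b) v

theorem Finset.exists_subset_card_eq_compl_subset {α : Type*} [Fintype α] [DecidableEq α]
    {s t : Finset α} {k : ℕ} (hst : sᶜ ⊆ t) (hks : k ≤ #s) (hkt : Fintype.card α - k ≤ #t) :
    ∃ S ⊆ s, #S = k ∧ Sᶜ ⊆ t := by
  have hdiff : #(s \ t) ≤ k := by
    have := card_le_card (sdiff_subset_sdiff (subset_univ s) (le_refl t))
    rw [← compl_eq_univ_sdiff, card_compl] at this
    omega
  obtain ⟨S, hsub, hSs, hS⟩ := exists_subsuperset_card_eq sdiff_subset hdiff hks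
  refine ⟨S, hSs, hS, fun v hv => ?_⟩
  by_cases hvs : v ∈ s
  · by_contra hvt
    exact mem_compl.mp hv (hsub (mem_sdiff.mpr ⟨hvs, hvt⟩))
  · exact hst (mem_compl.mpr hvs)

def altruisticGain {W : Type*} (N : W → Finset W) (g : W → ℕ → ℝ) (a : ℝ) (v : W) (t : ℕ) : ℝ :=
  dg (g v) t + a * ∑ u ∈ N v, dg (g u) t

section CompleteGraph

variable {W : Type*} [Fintype W] [DecidableEq W]
  (N : W → Finset W) (g : W → ℕ → ℝ) (c : W → ℝ) (a : ℝ)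

theorem toNat_add_nv_top (x : W → Bool) (v : W) :
    (x v).toNat + nv ⊤ x v = #{u | x u = true} := by
  have hnbr : ((⊤ : SimpleGraph W).neighborFinset v).filter (fun u => x u = true)
      = (univ.filter fun u => x u = true).erase v := by
    ext u
    simp only [mem_filter, mem_erase, SimpleGraph.mem_neighborFinset, SimpleGraph.top_adj,
      mem_univ, true_and]
    tauto
  rw [nv, hnbr]
  cases hv : x v
  · rw [erase_eq_of_notMem (by simp [hv])]
    simp
  · have hmem : v ∈ univ.filter fun u => x u = true := by simp [hv]
    rw [card_erase_of_mem hmem, Bool.toNat_true]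
    have := card_pos.mpr ⟨v, hmem⟩
    omega

theorem util_top (x : W → Bool) (v : W) :
    util ⊤ N g c a x v
      = g v #{u | x u = true} + a * ∑ u ∈ N v, g u #{w | x w = true} - c v * (x v).toNat := by
  simp only [util, toNat_add_nv_top]

theorem util_top_update_true {x : W → Bool} {v : W} (hv : x v = false) :
    util ⊤ N g c a (Function.update x v true) v
      = util ⊤ N g c a x v + altruisticGain N g a v #{u | x u = true} - c v := by
  have hcount : #{u | Function.update x v true u = true} = #{u | x u = true} + 1 := by
    have hfilter : univ.filter (fun u => Function.update x v true u = true)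
        = insert v (univ.filter fun u => x u = true) := by
      ext u
      by_cases h : u = v <;> simp [Function.update_apply, h]
    rw [hfilter, card_insert_of_notMem (by simp [hv])]
  rw [util_top, util_top, hcount, hv, altruisticGain]
  simp only [Function.update_self, Bool.toNat_true, Bool.toNat_false, dg, sum_sub_distrib]
  push_cast
  ring

theorem isPSNE_top_of_forall {x : W → Bool}
    (hone : ∀ v, x v = true → c v ≤ altruisticGain N g a v (#{u | x u = true} - 1))
    (hzero : ∀ v, x v = false → altruisticGain N g a v #{u | x u = true} ≤ c v) :
    isPSNE ⊤ N g c a x := by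
  intro v b
  cases hv : x v <;> cases b
  case false.false | true.true => rw [← hv, Function.update_eq_self]
  case false.true =>
    rw [util_top_update_true N g c a hv]
    linarith [hzero v hv]
  case true.false =>
    -- dropping out of `x` is the reverse of joining `y`, which has one player fewer
    set y := Function.update x v false
    have hyv : y v = false := Function.update_self ..
    have hxy : Function.update y v true = x := by
      rw [Function.update_idem, ← hv, Function.update_eq_self]
    have hcount : #{u | y u = true} = #{u | x u = true} - 1 := by
      have hfilter :
          univ.filter (fun u => y u = true) = (univ.filter fun u => x u = true).erase v := by
        ext u
        by_cases h : u = v <;> simp [y, Function.update_apply, h]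
      rw [hfilter, card_erase_of_mem (by simp [hv])]
    have := util_top_update_true N g c a hyv
    rw [hxy, hcount] at this
    linarith [hone v hv]

end CompleteGraph

open scoped Classical

theorem statement2_general {W : Type*} [Fintype W] [DecidableEq W]
    (N : W → Finset W)
    (g : W → ℕ → ℝ)
    (c : W → ℝ) (a : ℝ)
    (n k : ℕ) (hn : Fintype.card W = n)
    (hR1 : k ≤ (Finset.univ.filter (fun v : W =>
            c v ≤ dg (g v) (k - 1) + a * ∑ u ∈ N v, dg (g u) (k - 1))).card)
    (hR0 : n - k ≤ (Finset.univ.filter (fun v : W =>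
            dg (g v) k + a * ∑ u ∈ N v, dg (g u) k ≤ c v)).card)
    (hR01 : ((Finset.univ.filter (fun v : W =>
            dg (g v) k + a * ∑ u ∈ N v, dg (g u) k ≤ c v)) \
        (Finset.univ.filter (fun v : W =>
            c v ≤ dg (g v) (k - 1) + a * ∑ u ∈ N v, dg (g u) (k - 1)))).card =
      (Finset.univ \ (Finset.univ.filter (fun v : W =>
            c v ≤ dg (g v) (k - 1) + a * ∑ u ∈ N v, dg (g u) (k - 1)))).card) :
    ∃ x : W → Bool,
      (Finset.univ.filter (fun v : W => x v = true)).card = k ∧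
      isPSNE ⊤ N g c a x := by
  set R₁ := Finset.univ.filter fun v => c v ≤ altruisticGain N g a v (k - 1)
  set R₀ := Finset.univ.filter fun v => altruisticGain N g a v k ≤ c v
  have hcover : R₁ᶜ ⊆ R₀ := by
    have hR01' : #(R₀ \ R₁) = #(univ \ R₁) := hR01
    rw [compl_eq_univ_sdiff,
      ← eq_of_subset_of_card_le (sdiff_subset_sdiff (subset_univ R₀) le_rfl) hR01'.ge]
    exact sdiff_subset
  obtain ⟨S, hSR₁, hS, hSR₀⟩ :=
    exists_subset_card_eq_compl_subset hcover hR1 (hn ▸ hR0)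
  have hcount : #{v | decide (v ∈ S) = true} = k := by simpa using hS
  refine ⟨fun v => decide (v ∈ S), hcount, isPSNE_top_of_forall N g c a ?_ ?_⟩
  · intro v hv
    rw [hcount]
    exact (mem_filter.mp (hSR₁ (by simpa using hv))).2
  · intro v hv
    rw [hcount]
    exact (mem_filter.mp (hSR₀ (mem_compl.mpr (by simpa using hv)))).2

/-- on the complete graph, if `|R₁(k)| ≥ k`, `|R₀(k)| ≥ n − k` and
`|R₀(k) \ R₁(k)| = |V \ R₁(k)|` for some `0 < k < n = |V|`, then the BNPG game
with altruism has a PSNE in which exactly `k` players play 1. -/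
theorem statement2 {W : Type*} [Fintype W] [DecidableEq W]
    (N : W → Finset W) (hN : ∀ v : W, ∀ u ∈ N v, (⊤ : SimpleGraph W).Adj v u)
    (g : W → ℕ → ℝ) (hmono : ∀ v, Monotone (g v)) (hnn : ∀ v t, 0 ≤ g v t)
    (c : W → ℝ) (hc : ∀ v, 0 ≤ c v) (a : ℝ) (ha : 0 ≤ a)
    (n k : ℕ) (hn : Fintype.card W = n) (hk0 : 0 < k) (hkn : k < n)
    (hR1 : k ≤ (Finset.univ.filter (fun v : W =>
            c v ≤ dg (g v) (k - 1) + a * ∑ u ∈ N v, dg (g u) (k - 1))).card)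
    (hR0 : n - k ≤ (Finset.univ.filter (fun v : W =>
            dg (g v) k + a * ∑ u ∈ N v, dg (g u) k ≤ c v)).card)
    (hR01 : ((Finset.univ.filter (fun v : W =>
            dg (g v) k + a * ∑ u ∈ N v, dg (g u) k ≤ c v)) \
        (Finset.univ.filter (fun v : W =>
            c v ≤ dg (g v) (k - 1) + a * ∑ u ∈ N v, dg (g u) (k - 1)))).card =
      (Finset.univ \ (Finset.univ.filter (fun v : W =>
            c v ≤ dg (g v) (k - 1) + a * ∑ u ∈ N v, dg (g u) (k - 1)))).card) :
    ∃ x : W → Bool,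
      (Finset.univ.filter (fun v : W => x v = true)).card = k ∧
      isPSNE ⊤ N g c a x :=
  statement2_general N g c a n k hn hR1 hR0 hR01
end

section
/- Let (G=(V,E), p) be a directed public goods game and ε > 0, and consider the constructed BNPG game with symmetric altruism on V' = {u_in, u_out : u∈V} with input edges {{u_in,u_out} : u∈V} ∪ {{u_out,v_in} : (u,v)∈E}, altruistic edges {{u_in,u_out} : u∈V}, a = 1, c_{u_in} = 1+2ε, c_{u_out} = p, g_{u_in}(x) = 1 if x > 0 and 0 if x = 0, and g_{u_out} ≡ 0. If (Δ_w)_{w∈V'} is an ε-Nash equilibrium of this BNPG game, then (Δ_u)_{u∈V} with Δ_u := Δ_{u_out} is an ε-Nash equilibrium of the directed public goods game (G, p). -/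
open Finset

/-- `Y(0) = 0` and `Y(t) = 1` for `t > 0`. -/
def Y (t : ℕ) : ℝ := if t = 0 then 0 else 1

/-- Probability of the pure profile `x` under the product distribution in which
player `v` deterministically plays `b` and every other player `u` plays 1 with
probability `q u` (and 0 with probability `1 - q u`). -/
def weight {W : Type*} [Fintype W] [DecidableEq W]
    (q : W → ℝ) (v : W) (b : Bool) (x : W → Bool) : ℝ :=
  ∏ u : W, if u = v then (if x u = b then 1 else 0)
    else (if x u then q u else 1 - q u)

/-- Expected utility of player `v` playing `b` in a BNPG game with altruism when the
other players mix independently (`q u` = probability that `u` plays 1). -/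
def expUtil {W : Type*} [Fintype W] [DecidableEq W]
    (G : SimpleGraph W) [DecidableRel G.Adj]
    (N : W → Finset W) (g : W → ℕ → ℝ) (c : W → ℝ) (a : ℝ)
    (q : W → ℝ) (v : W) (b : Bool) : ℝ :=
  ∑ x : W → Bool, weight q v b x * util G N g c a x v

/-- `q` (with `q v` = probability that `v` plays 1) is an `ε`-Nash equilibrium of a
BNPG game with altruism: every strategy in the support of a player's mixed strategy
is an `ε`-best response. -/
def isEpsNE {W : Type*} [Fintype W] [DecidableEq W]
    (G : SimpleGraph W) [DecidableRel G.Adj]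
    (N : W → Finset W) (g : W → ℕ → ℝ) (c : W → ℝ) (a : ℝ)
    (q : W → ℝ) (ε : ℝ) : Prop :=
  (∀ v : W, 0 ≤ q v ∧ q v ≤ 1) ∧
  ∀ v : W,
    (0 < q v → ∀ b : Bool,
      expUtil G N g c a q v true ≥ expUtil G N g c a q v b - ε) ∧
    (q v < 1 → ∀ b : Bool,
      expUtil G N g c a q v false ≥ expUtil G N g c a q v b - ε)

section Construction

variable {V : Type*} [Fintype V] [DecidableEq V]

/-- Adjacency (as a Boolean function) of the input network of the constructed BNPG
game: `Sum.inl u` is `u_in`, `Sum.inr u` is `u_out`; `w_in` is adjacent to `u_out`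
iff `w = u` or `(u,w)` is an edge of the directed public goods game. -/
def adjPG (A : V → V → Prop) [DecidableRel A] : V ⊕ V → V ⊕ V → Bool
  | Sum.inl win, Sum.inr uout => decide (win = uout) || decide (A uout win)
  | Sum.inr uout, Sum.inl win => decide (win = uout) || decide (A uout win)
  | _, _ => false

/-- Input network of the constructed BNPG game. -/
def GPG (A : V → V → Prop) [DecidableRel A] : SimpleGraph (V ⊕ V) where
  Adj a b := adjPG A a b = true
  symm := ⟨by rintro (u | u) (w | w) h <;> simp_all [adjPG]⟩
  loopless := ⟨by rintro (u | u) h <;> simp [adjPG] at h⟩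

instance (A : V → V → Prop) [DecidableRel A] : DecidableRel (GPG A).Adj :=
  fun a b => inferInstanceAs (Decidable (adjPG A a b = true))

/-- Altruistic network: `u_in` and `u_out` are altruistically linked. -/
def NPG : V ⊕ V → Finset (V ⊕ V)
  | Sum.inl u => {Sum.inr u}
  | Sum.inr u => {Sum.inl u}

/-- Externality functions: `g_{u_in}(x) = 1` iff `x > 0`, and `g_{u_out} ≡ 0`. -/
def gPG : V ⊕ V → ℕ → ℝ
  | Sum.inl _ => fun t => if t = 0 then 0 else 1
  | Sum.inr _ => fun _ => 0

/-- Costs: `c_{u_in} = 1 + 2ε` and `c_{u_out} = p`. -/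
def cPG (p ε : ℝ) : V ⊕ V → ℝ
  | Sum.inl _ => 1 + 2 * ε
  | Sum.inr _ => p

end Construction

/-- Utility of player `v` in a directed public goods game given by the directed
adjacency relation `A` (edge `(u,v)` iff `A u v`) and price `p`. -/
def utilD {V : Type*} [Fintype V] [DecidableEq V]
    (A : V → V → Prop) [DecidableRel A] (p : ℝ) (x : V → Bool) (v : V) : ℝ :=
  Y ((x v).toNat + (Finset.univ.filter (fun u : V => A u v ∧ x u = true)).card)
    - p * (x v).toNat

/-- Expected utility in the directed public goods game. -/
def expUtilD {V : Type*} [Fintype V] [DecidableEq V]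
    (A : V → V → Prop) [DecidableRel A] (p : ℝ) (q : V → ℝ) (v : V) (b : Bool) : ℝ :=
  ∑ x : V → Bool, weight q v b x * utilD A p x v

/-- `ε`-Nash equilibrium of the directed public goods game. -/
def isEpsNED {V : Type*} [Fintype V] [DecidableEq V]
    (A : V → V → Prop) [DecidableRel A] (p : ℝ) (q : V → ℝ) (ε : ℝ) : Prop :=
  (∀ v : V, 0 ≤ q v ∧ q v ≤ 1) ∧
  ∀ v : V,
    (0 < q v → ∀ b : Bool, expUtilD A p q v true ≥ expUtilD A p q v b - ε) ∧
    (q v < 1 → ∀ b : Bool, expUtilD A p q v false ≥ expUtilD A p q v b - ε)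

/-! Playing 1 raises the utility of `u_in` by at most 1 (its own `g_{u_in}` jumps from 0 to 1,
while the altruistic term `g_{u_out}` vanishes) but costs `1 + 2ε`, so in an `ε`-equilibrium every
`u_in` plays 0 with probability one. With every `u_in` silent, the utility of `u_out` is `Y` of the
number of 1's among itself and its in-neighbours, minus `p` times its own play: exactly its utility
in the directed public goods game. Hence the expected utilities of the `u_out` players, and with
them the equilibrium conditions, coincide. -/

section Weight

variable {W : Type*} [Fintype W] [DecidableEq W]

lemma weight_eq_zero_of_ne {q : W → ℝ} {v : W} {b : Bool} {x : W → Bool} (h : x v ≠ b) :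
    weight q v b x = 0 :=
  Finset.prod_eq_zero (Finset.mem_univ v) (by simp [h])

lemma weight_nonneg {q : W → ℝ} (hq : ∀ u, 0 ≤ q u ∧ q u ≤ 1) (v : W) (b : Bool)
    (x : W → Bool) : 0 ≤ weight q v b x := by
  refine Finset.prod_nonneg fun u _ => ?_
  split_ifs <;> linarith [hq u]

lemma sum_weight (q : W → ℝ) (v : W) (b : Bool) : ∑ x : W → Bool, weight q v b x = 1 := by
  have hprod := Fintype.prod_sum fun (u : W) (c : Bool) =>
    if u = v then (if c = b then (1 : ℝ) else 0) else (if c then q u else 1 - q u)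
  beta_reduce at hprod
  unfold weight
  rw [← hprod]
  refine Finset.prod_eq_one fun u _ => ?_
  split_ifs <;> cases b <;> simp

lemma weight_update_xor (q : W → ℝ) (v : W) (b b' : Bool) (x : W → Bool) :
    weight q v b' (Function.update x v (x v ^^ (b ^^ b'))) = weight q v b x := by
  refine Finset.prod_congr rfl fun u _ => ?_
  by_cases h : u = v
  · subst h; cases b <;> cases b' <;> cases x u <;> simp
  · simp [h]

lemma sum_weight_mul_eq_sum_weight_mul_update (q : W → ℝ) (v : W) (b b' : Bool)
    (f : (W → Bool) → ℝ) :
    ∑ x, weight q v b x * f x = ∑ x, weight q v b' x * f (Function.update x v b) := by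
  have hupd : ∀ x, weight q v b x * f x = weight q v b x * f (Function.update x v b) := by
    intro x
    by_cases h : x v = b
    · rw [← h, Function.update_eq_self]
    · rw [weight_eq_zero_of_ne h, zero_mul, zero_mul]
  -- `σ` flips `x v` exactly when `b ≠ b'`; it is an involution taking weights for `b` to `b'`
  let σ : (W → Bool) → (W → Bool) := fun x => Function.update x v (x v ^^ (b ^^ b'))
  have hσ : Function.Involutive σ := fun x => by simp [σ]
  rw [Finset.sum_congr rfl fun x _ => hupd x]
  refine Fintype.sum_bijective σ hσ.bijective _ _ fun x => ?_
  simp [σ, weight_update_xor]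

lemma sum_weight_true_sub_false_le {q : W → ℝ} (hq : ∀ u, 0 ≤ q u ∧ q u ≤ 1) (v : W)
    (f : (W → Bool) → ℝ) {c : ℝ}
    (hf : ∀ x, f (Function.update x v true) - f (Function.update x v false) ≤ c) :
    ∑ x, weight q v true x * f x - ∑ x, weight q v false x * f x ≤ c := by
  rw [sum_weight_mul_eq_sum_weight_mul_update q v true true,
    sum_weight_mul_eq_sum_weight_mul_update q v false true, ← Finset.sum_sub_distrib]
  calc ∑ x, (weight q v true x * f (Function.update x v true)
          - weight q v true x * f (Function.update x v false))
      ≤ ∑ x, weight q v true x * c := by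
        refine Finset.sum_le_sum fun x _ => ?_
        rw [← mul_sub]
        exact mul_le_mul_of_nonneg_left (hf x) (weight_nonneg hq v true x)
    _ = c := by rw [← Finset.sum_mul, sum_weight, one_mul]

end Weight

lemma weight_sumElim_inr {α β : Type*} [Fintype α] [DecidableEq α] [Fintype β] [DecidableEq β]
    (q : α ⊕ β → ℝ) (v : β) (b : Bool) (y : α → Bool) (z : β → Bool) :
    weight q (Sum.inr v) b (Sum.elim y z)
      = (∏ a, if y a then q (Sum.inl a) else 1 - q (Sum.inl a))
        * weight (fun w => q (Sum.inr w)) v b z := by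
  unfold weight
  rw [Fintype.prod_sum_type]
  simp only [reduceCtorEq, if_false, Sum.elim_inl, Sum.elim_inr, Sum.inr.injEq]
  congr

lemma sum_weight_inr_mul {α β : Type*} [Fintype α] [DecidableEq α] [Fintype β] [DecidableEq β]
    {q : α ⊕ β → ℝ} (hq : ∀ a, q (Sum.inl a) = 0) (v : β) (b : Bool)
    (f : (α ⊕ β → Bool) → ℝ) :
    ∑ x, weight q (Sum.inr v) b x * f x
      = ∑ z, weight (fun w => q (Sum.inr w)) v b z * f (Sum.elim (fun _ => false) z) := by
  rw [← (Equiv.sumArrowEquivProdArrow α β Bool).symm.sum_comp, Fintype.sum_prod_type,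
    Finset.sum_eq_single (fun _ => false)]
  · simp [Equiv.sumArrowEquivProdArrow, weight_sumElim_inr, hq]
  · intro y _ hy
    obtain ⟨a, ha⟩ : ∃ a, y a = true := by
      by_contra! h
      exact hy (funext fun a => by simpa using h a)
    refine Finset.sum_eq_zero fun z _ => ?_
    have hprod : (∏ a, if y a then q (Sum.inl a) else 1 - q (Sum.inl a)) = 0 :=
      Finset.prod_eq_zero (Finset.mem_univ a) (by simp [ha, hq])
    simp [Equiv.sumArrowEquivProdArrow, weight_sumElim_inr, hprod]
  · simp

lemma nv_update_self {W : Type*} [Fintype W] [DecidableEq W] (G : SimpleGraph W)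
    [DecidableRel G.Adj] (x : W → Bool) (v : W) (b : Bool) :
    nv G (Function.update x v b) v = nv G x v := by
  unfold nv
  congr 1
  refine Finset.filter_congr fun u hu => ?_
  rw [Function.update_of_ne ((G.mem_neighborFinset v u).mp hu).ne']

lemma Y_nonneg (n : ℕ) : 0 ≤ Y n := by
  unfold Y; split_ifs <;> norm_num

lemma Y_le_one (n : ℕ) : Y n ≤ 1 := by
  unfold Y; split_ifs <;> norm_num

lemma Y_eq_of_eq_zero_iff {m n : ℕ} (h : m = 0 ↔ n = 0) : Y m = Y n := by
  simp only [Y, h]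

lemma gPG_inl {V : Type*} (u : V) : gPG (Sum.inl u) = Y := rfl

section Construction

variable {V : Type*} [DecidableEq V] (A : V → V → Prop) [DecidableRel A]

lemma GPG_adj_inl_inl (u w : V) : ¬ (GPG A).Adj (Sum.inl u) (Sum.inl w) :=
  Bool.false_ne_true

lemma GPG_adj_inl_inr (u w : V) : (GPG A).Adj (Sum.inl u) (Sum.inr w) ↔ w = u ∨ A w u := by
  change (decide (u = w) || decide (A w u)) = true ↔ _
  simp only [Bool.or_eq_true, decide_eq_true_eq]
  exact or_congr_left eq_comm

variable [Fintype V]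

lemma util_inl_update_true_sub_false_le (p ε : ℝ) (x : V ⊕ V → Bool) (u : V) :
    util (GPG A) NPG gPG (cPG p ε) 1 (Function.update x (Sum.inl u) true) (Sum.inl u)
      - util (GPG A) NPG gPG (cPG p ε) 1 (Function.update x (Sum.inl u) false) (Sum.inl u)
      ≤ -(2 * ε) := by
  simp only [util, nv_update_self, NPG, Finset.sum_singleton, Function.update_self, gPG_inl,
    gPG.eq_2, cPG, Bool.toNat_true, Bool.toNat_false]
  push_cast
  linarith [Y_le_one (1 + nv (GPG A) x (Sum.inl u)), Y_nonneg (0 + nv (GPG A) x (Sum.inl u))]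

lemma q_inl_eq_zero {p ε : ℝ} (hε : 0 < ε) {q : V ⊕ V → ℝ}
    (hq : isEpsNE (GPG A) NPG gPG (cPG p ε) 1 q ε) (u : V) : q (Sum.inl u) = 0 := by
  by_contra hne
  have hpos : 0 < q (Sum.inl u) := lt_of_le_of_ne (hq.1 (Sum.inl u)).1 (Ne.symm hne)
  have hbest := (hq.2 (Sum.inl u)).1 hpos false
  have hgain := sum_weight_true_sub_false_le hq.1 (Sum.inl u)
    (fun x => util (GPG A) NPG gPG (cPG p ε) 1 x (Sum.inl u))
    (util_inl_update_true_sub_false_le A p ε · u)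
  unfold expUtil at hbest
  linarith

lemma nv_inl_eq_zero_iff (x : V ⊕ V → Bool) (u : V) :
    nv (GPG A) x (Sum.inl u) = 0 ↔ ∀ w, (w = u ∨ A w u) → x (Sum.inr w) = false := by
  rw [nv, Finset.card_eq_zero, Finset.filter_eq_empty_iff]
  simp only [SimpleGraph.mem_neighborFinset, Sum.forall, GPG_adj_inl_inl, GPG_adj_inl_inr,
    Bool.not_eq_true, false_imp_iff, implies_true, true_and]

lemma util_inr_sumElim (p ε : ℝ) (z : V → Bool) (u : V) :
    util (GPG A) NPG gPG (cPG p ε) 1 (Sum.elim (fun _ => false) z) (Sum.inr u)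
      = utilD A p z u := by
  have hcover : nv (GPG A) (Sum.elim (fun _ => false) z) (Sum.inl u) = 0
      ↔ (z u).toNat + (Finset.univ.filter fun w => A w u ∧ z w = true).card = 0 := by
    rw [nv_inl_eq_zero_iff]
    simp [forall_eq_or_imp, Finset.filter_eq_empty_iff]
  simp only [util, utilD, NPG, Finset.sum_singleton, Sum.elim_inl, Sum.elim_inr, gPG_inl,
    gPG.eq_2, cPG, Bool.toNat_false, zero_add, one_mul, Y_eq_of_eq_zero_iff hcover]

end Construction

/-- if `q` is an `ε`-Nash equilibrium of the BNPG game with symmetric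
altruism constructed from a directed public goods game `(A, p)`, then the restriction
of `q` to the `u_out` players is an `ε`-Nash equilibrium of `(A, p)`. -/
theorem statement10 {V : Type*} [Fintype V] [DecidableEq V]
    (A : V → V → Prop) [DecidableRel A] (p ε : ℝ) (hε : 0 < ε)
    (q : V ⊕ V → ℝ)
    (hq : isEpsNE (GPG A) NPG gPG (cPG p ε) 1 q ε) :
    isEpsNED A p (fun u => q (Sum.inr u)) ε := by
  have hexp : ∀ u b, expUtil (GPG A) NPG gPG (cPG p ε) 1 q (Sum.inr u) b
      = expUtilD A p (fun w => q (Sum.inr w)) u b := fun u b => by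
    rw [expUtil, sum_weight_inr_mul (q_inl_eq_zero A hε hq)]
    simp only [util_inr_sumElim, expUtilD]
  refine ⟨fun u => hq.1 (Sum.inr u), fun u => ⟨fun hpos b => ?_, fun hlt b => ?_⟩⟩
  · simpa only [hexp] using (hq.2 (Sum.inr u)).1 hpos b
  · simpa only [hexp] using (hq.2 (Sum.inr u)).2 hlt b
end
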